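/- arXiv:2505.20060 — 2 statements merged into one kernel-verified Lean document; each statement's English description precedes it below -/
import Mathlib

section
/- Let θ, η, ξ : [0, δ) → ℝ be continuous with η > 0, ξ ≥ 0, and θ(0) = 0. If θ is differentiable and satisfies θ'(t)·η(t) ≤ ∫₀ᵗ θ(s)·ξ(s) ds for all t ∈ [0, δ), and additionally θ'(t)·η(t) − θ(t)·ζ(t) ≤ ∫₀ᵗ θ(s)·ξ(s) ds for a continuous function ζ, then θ(t) ≤ 0 for all t ∈ [0, δ). -/
open Set intervalIntegral

/-- ODE comparison lemma: `θ'(t)η(t) − θ(t)ζ(t) ≤ ∫₀ᵗ θξ`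
with `θ(0) = 0`, `η > 0`, `ξ ≥ 0` forces `θ ≤ 0` on `[0, δ)`. -/
theorem ode_comparison (δ : ℝ) (hδ : 0 < δ) (θ θ' η ξ ζ : ℝ → ℝ)
    (hθc : ContinuousOn θ (Ico 0 δ)) (hηc : ContinuousOn η (Ico 0 δ))
    (hξc : ContinuousOn ξ (Ico 0 δ)) (hζc : ContinuousOn ζ (Ico 0 δ))
    (hη : ∀ t ∈ Ico (0:ℝ) δ, 0 < η t) (hξ : ∀ t ∈ Ico (0:ℝ) δ, 0 ≤ ξ t)
    (hθ0 : θ 0 = 0)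
    (hderiv : ∀ t ∈ Ico (0:ℝ) δ, HasDerivAt θ (θ' t) t)
    (h1 : ∀ t ∈ Ico (0:ℝ) δ, θ' t * η t ≤ ∫ s in (0:ℝ)..t, θ s * ξ s)
    (h2 : ∀ t ∈ Ico (0:ℝ) δ, θ' t * η t - θ t * ζ t ≤ ∫ s in (0:ℝ)..t, θ s * ξ s) :
    ∀ t ∈ Ico (0:ℝ) δ, θ t ≤ 0 := by
  by_contra hcon
  push_neg at hcon
  obtain ⟨t₁, ht₁, ht₁pos⟩ := hcon
  obtain ⟨ht₁0, ht₁δ⟩ := ht₁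
  have hθat : ∀ t ∈ Ico (0:ℝ) δ, ContinuousAt θ t := fun t ht => (hderiv t ht).continuousAt
  have hsub : Icc (0:ℝ) t₁ ⊆ Ico 0 δ := fun x hx => ⟨hx.1, lt_of_le_of_lt hx.2 ht₁δ⟩
  set B : Set ℝ := {t | t ∈ Icc (0:ℝ) t₁ ∧ ∀ s ∈ Icc (0:ℝ) t, θ s ≤ 0} with hBdef
  have h0B : (0:ℝ) ∈ B := by
    refine ⟨⟨le_refl 0, ht₁0⟩, fun s hs => ?_⟩
    have : s = 0 := le_antisymm hs.2 hs.1
    rw [this, hθ0]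
  have hbdd : BddAbove B := ⟨t₁, fun x hx => hx.1.2⟩
  set T := sSup B with hTdef
  have hTB : 0 ≤ T := le_csSup hbdd h0B
  have hTt₁ : T ≤ t₁ := csSup_le ⟨0, h0B⟩ (fun x hx => hx.1.2)
  have hTδ : T < δ := lt_of_le_of_lt hTt₁ ht₁δ
  have hTmem : T ∈ Ico (0:ℝ) δ := ⟨hTB, hTδ⟩
  -- θ ≤ 0 on [0, T)
  have hneg_lt : ∀ s ∈ Ico (0:ℝ) T, θ s ≤ 0 := by
    intro s hs
    obtain ⟨t, htB, hst⟩ := exists_lt_of_lt_csSup ⟨0, h0B⟩ hs.2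
    exact htB.2 s ⟨hs.1, le_of_lt hst⟩
  -- θ T ≤ 0
  have hθT : θ T ≤ 0 := by
    rcases eq_or_lt_of_le hTB with h | h
    · rw [← h, hθ0]
    · have htend : Filter.Tendsto θ (nhdsWithin T (Iio T)) (nhds (θ T)) :=
        ((hθat T hTmem).continuousWithinAt).tendsto
      refine le_of_tendsto htend ?_
      have hmem : Ioo (0:ℝ) T ∈ nhdsWithin T (Iio T) :=
        Ioo_mem_nhdsLT_of_mem ⟨h, le_refl T⟩
      filter_upwards [hmem] with s hs
      exact hneg_lt s ⟨le_of_lt hs.1, hs.2⟩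
  have hnegT : ∀ s ∈ Icc (0:ℝ) T, θ s ≤ 0 := by
    intro s hs
    rcases lt_or_eq_of_le hs.2 with h | h
    · exact hneg_lt s ⟨hs.1, h⟩
    · rw [h]; exact hθT
  have hTlt : T < t₁ := by
    rcases lt_or_eq_of_le hTt₁ with h | h
    · exact h
    · exfalso; rw [h] at hθT; linarith
  -- compact bounds on [0, t₁]
  have hne : (Icc (0:ℝ) t₁).Nonempty := ⟨0, le_refl 0, ht₁0⟩
  obtain ⟨xa, hxa, hxamin⟩ := isCompact_Icc.exists_isMinOn hne (hηc.mono hsub)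
  obtain ⟨xk, hxk, hxkmax⟩ := isCompact_Icc.exists_isMaxOn hne (hξc.mono hsub)
  set a := η xa with hadef
  set K := ξ xk with hKdef
  have ha : 0 < a := hη xa (hsub hxa)
  have hK : 0 ≤ K := hξ xk (hsub hxk)
  have hamin : ∀ y ∈ Icc (0:ℝ) t₁, a ≤ η y := fun y hy => hxamin hy
  have hKmax : ∀ y ∈ Icc (0:ℝ) t₁, ξ y ≤ K := fun y hy => hxkmax hy
  set ε := min (t₁ - T) (min 1 (a / (2 * (K + 1)))) with hεdef
  have hεpos : 0 < ε := by
    refine lt_min (by linarith) (lt_min one_pos ?_)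
    positivity
  have hεle1 : ε ≤ 1 := le_trans (min_le_right _ _) (min_le_left _ _)
  have hεle2 : ε ≤ a / (2 * (K + 1)) := le_trans (min_le_right _ _) (min_le_right _ _)
  have hεle3 : T + ε ≤ t₁ := by
    have := min_le_left (t₁ - T) (min 1 (a / (2 * (K + 1))))
    linarith
  have hJsub : Icc T (T + ε) ⊆ Icc (0:ℝ) t₁ := fun x hx =>
    ⟨le_trans hTB hx.1, le_trans hx.2 hεle3⟩
  have hJsub' : Icc T (T + ε) ⊆ Ico (0:ℝ) δ := fun x hx => hsub (hJsub hx)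
  -- max of θ on [T, T+ε]
  have hJne : (Icc T (T + ε)).Nonempty := ⟨T, le_refl T, by linarith⟩
  have hθJ : ContinuousOn θ (Icc T (T + ε)) := fun x hx =>
    (hθat x (hJsub' hx)).continuousWithinAt
  obtain ⟨tm, htmJ, htmmax⟩ := isCompact_Icc.exists_isMaxOn hJne hθJ
  set M := θ tm with hMdef
  have hMmax : ∀ u ∈ Icc T (T + ε), θ u ≤ M := fun u hu => htmmax hu
  -- interval integrability
  have hint : ∀ u v : ℝ, u ∈ Icc (0:ℝ) t₁ → v ∈ Icc (0:ℝ) t₁ →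
      IntervalIntegrable (fun s => θ s * ξ s) MeasureTheory.volume u v := by
    intro u v hu hv
    apply ContinuousOn.intervalIntegrable
    apply (hθc.mul hξc).mono
    intro x hx
    exact hsub ⟨le_trans (le_min hu.1 hv.1) (by exact hx.1),
      le_trans hx.2 (max_le hu.2 hv.2)⟩
  -- main claim: θ ≤ 0 on [T, T+ε]
  have hall : ∀ u ∈ Icc T (T + ε), θ u ≤ 0 := by
    rcases le_or_gt M 0 with hM | hM
    · exact fun u hu => le_trans (hMmax u hu) hM
    · exfalso
      set N := K * ε * M with hNdef
      have hN0 : 0 ≤ N := by positivity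
      set C := N / a with hCdef
      have hC0 : 0 ≤ C := by positivity
      -- bound on the integral
      have hIbound : ∀ s ∈ Icc T (T + ε), (∫ u in (0:ℝ)..s, θ u * ξ u) ≤ N := by
        intro s hs
        have hsmem : s ∈ Icc (0:ℝ) t₁ := hJsub hs
        have hI1 : (∫ u in (0:ℝ)..T, θ u * ξ u) ≤ 0 := by
          have hnn : 0 ≤ ∫ u in (0:ℝ)..T, -(θ u * ξ u) := by
            apply integral_nonneg hTB
            intro u hu
            have hu' : u ∈ Icc (0:ℝ) t₁ := ⟨hu.1, le_trans hu.2 hTt₁⟩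
            have := mul_nonpos_of_nonpos_of_nonneg (hnegT u hu) (hξ u (hsub hu'))
            linarith
          rw [intervalIntegral.integral_neg] at hnn
          linarith
        have hI2 : (∫ u in T..s, θ u * ξ u) ≤ N := by
          have hTs : T ≤ s := hs.1
          calc (∫ u in T..s, θ u * ξ u) ≤ ∫ u in T..s, M * K := by
                apply integral_mono_on hTs
                  (hint T s ⟨hTB, hTt₁⟩ hsmem) intervalIntegrable_const
                intro u hu
                have huJ : u ∈ Icc T (T + ε) := ⟨hu.1, le_trans hu.2 hs.2⟩
                have h1u : θ u ≤ M := hMmax u huJ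
                have h2u : ξ u ≤ K := hKmax u (hJsub huJ)
                have h3u : 0 ≤ ξ u := hξ u (hJsub' huJ)
                calc θ u * ξ u ≤ M * ξ u := mul_le_mul_of_nonneg_right h1u h3u
                  _ ≤ M * K := mul_le_mul_of_nonneg_left h2u (le_of_lt hM)
            _ = (s - T) * (M * K) := by rw [integral_const, smul_eq_mul]
            _ ≤ ε * (M * K) := by
                apply mul_le_mul_of_nonneg_right (by linarith [hs.2]) (by positivity)
            _ = N := by rw [hNdef]; ring
        have hsplit : (∫ u in (0:ℝ)..T, θ u * ξ u) + (∫ u in T..s, θ u * ξ u)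
            = ∫ u in (0:ℝ)..s, θ u * ξ u :=
          integral_add_adjacent_intervals
            (hint 0 T ⟨le_refl 0, ht₁0⟩ ⟨hTB, hTt₁⟩) (hint T s ⟨hTB, hTt₁⟩ hsmem)
        linarith
      -- derivative bound
      have hderivb : ∀ s ∈ Icc T (T + ε), θ' s ≤ C := by
        intro s hs
        have hsmem : s ∈ Ico (0:ℝ) δ := hJsub' hs
        have hηs : 0 < η s := hη s hsmem
        have hstep : θ' s ≤ N / η s := by
          rw [le_div_iff₀ hηs]
          exact le_trans (h1 s hsmem) (hIbound s hs)
        refine le_trans hstep ?_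
        exact div_le_div_of_nonneg_left hN0 ha (hamin s (hJsub hs))
      -- antitonicity of θ t - C t
      have hg : AntitoneOn (fun t => θ t - C * t) (Icc T (T + ε)) := by
        apply antitoneOn_of_deriv_nonpos (convex_Icc _ _)
        · exact hθJ.sub (continuousOn_const.mul continuousOn_id)
        · intro x hx
          rw [interior_Icc] at hx
          have hx' : x ∈ Icc T (T + ε) := ⟨le_of_lt hx.1, le_of_lt hx.2⟩
          exact ((hderiv x (hJsub' hx')).sub
            ((hasDerivAt_id x).const_mul C)).differentiableAt.differentiableWithinAt
        · intro x hx
          rw [interior_Icc] at hx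
          have hx' : x ∈ Icc T (T + ε) := ⟨le_of_lt hx.1, le_of_lt hx.2⟩
          have hd : HasDerivAt (fun t => θ t - C * t) (θ' x - C * 1)
              x := (hderiv x (hJsub' hx')).sub ((hasDerivAt_id x).const_mul C)
          rw [hd.deriv]
          have := hderivb x hx'
          linarith
      have hmono := hg ⟨le_refl T, by linarith⟩ htmJ htmJ.1
      simp only at hmono
      -- hmono : θ tm - C * tm ≤ θ T - C * T
      have hθTle : θ T ≤ 0 := hnegT T ⟨hTB, le_refl T⟩
      have htmε : tm - T ≤ ε := by have := htmJ.2; linarith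
      have hCbound : C * (tm - T) ≤ C * ε := mul_le_mul_of_nonneg_left htmε hC0
      have hMle : M ≤ C * ε := by
        have : M ≤ θ T + C * (tm - T) := by rw [hMdef]; linarith
        linarith
      -- C * ε = K * ε^2 * M / a ≤ M / 2
      have hKε : (K + 1) * ε ≤ a / 2 := by
        have h2 : ε * (2 * (K + 1)) ≤ a :=
          (le_div_iff₀ (by positivity : (0:ℝ) < 2 * (K+1))).mp hεle2
        nlinarith
      have hCε : C * ε ≤ M / 2 := by
        rw [hCdef, hNdef, div_mul_eq_mul_div, div_le_iff₀ ha]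
        nlinarith
      linarith
  -- contradiction with sSup
  have hTεB : T + ε ∈ B := by
    refine ⟨⟨by linarith, hεle3⟩, fun s hs => ?_⟩
    rcases le_total s T with h | h
    · exact hnegT s ⟨hs.1, h⟩
    · exact hall s ⟨h, hs.2⟩
  have := le_csSup hbdd hTεB
  linarith
end

section
/- Let f : [0, δ) → ℝ be continuous with f(0) = 0 and suppose for all t, f'(t)·η(t) ≤ ∫₀ᵗ f(s)ξ(s) ds with η continuous positive, ξ continuous nonnegative, and f is also constrained to satisfy f(t) ≥ 0 (weakly outermost condition). Then f ≡ 0 on [0, δ). -/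
open Set intervalIntegral

/-- if a differentiable `f` with `f(0) = 0` satisfies
`f'(t)η(t) ≤ ∫₀ᵗ fξ` with `η > 0` continuous, `ξ ≥ 0` continuous, and `f ≥ 0`
pointwise (weakly outermost constraint), then `f ≡ 0` on `[0, δ)`. -/
theorem ode_comparison_weakly_outermost (δ : ℝ) (hδ : 0 < δ)
    (f f' η ξ : ℝ → ℝ)
    (hfc : ContinuousOn f (Ico 0 δ)) (hf0 : f 0 = 0)
    (hηc : ContinuousOn η (Ico 0 δ)) (hξc : ContinuousOn ξ (Ico 0 δ))
    (hη : ∀ t ∈ Ico (0:ℝ) δ, 0 < η t) (hξ : ∀ t ∈ Ico (0:ℝ) δ, 0 ≤ ξ t)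
    (hderiv : ∀ t ∈ Ico (0:ℝ) δ, HasDerivAt f (f' t) t)
    (hineq : ∀ t ∈ Ico (0:ℝ) δ, f' t * η t ≤ ∫ s in (0:ℝ)..t, f s * ξ s)
    (hpos : ∀ t ∈ Ico (0:ℝ) δ, 0 ≤ f t) :
    ∀ t ∈ Ico (0:ℝ) δ, f t = 0 := by
  intro t ht
  refine le_antisymm ?_ (hpos t ht)
  set T : ℝ := (t + δ) / 2 with hTdef
  have hTlt : T < δ := by
    have := ht.2
    simp only [hTdef]; linarith
  have hT0 : (0:ℝ) ≤ T := by
    have := ht.1; have := ht.2; simp only [hTdef]; linarith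
  have htT : t ≤ T := by
    have := ht.2; simp only [hTdef]; linarith
  have hsub : Icc (0:ℝ) T ⊆ Ico 0 δ := fun x hx => ⟨hx.1, lt_of_le_of_lt hx.2 hTlt⟩
  -- min of η and max of ξ on [0,T]
  obtain ⟨xm, hxm, hmin⟩ :=
    isCompact_Icc.exists_isMinOn (nonempty_Icc.2 hT0) (hηc.mono hsub)
  obtain ⟨xM, hxM, hmax⟩ :=
    isCompact_Icc.exists_isMaxOn (nonempty_Icc.2 hT0) (hξc.mono hsub)
  set m : ℝ := η xm with hmdef
  set M : ℝ := ξ xM with hMdef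
  have hm : 0 < m := hη xm (hsub hxm)
  have hM : 0 ≤ M := hξ xM (hsub hxM)
  -- integrability of f on subintervals
  have hfci : ∀ x ∈ Icc (0:ℝ) T, IntervalIntegrable f MeasureTheory.volume 0 x := by
    intro x hx
    apply ContinuousOn.intervalIntegrable
    rw [uIcc_of_le hx.1]
    exact hfc.mono fun s hs => hsub ⟨hs.1, le_trans hs.2 hx.2⟩
  -- clamped extension of f, globally continuous
  set fe : ℝ → ℝ := fun s => f (max 0 (min s T)) with hfedef
  have hclamp : ∀ s, max 0 (min s T) ∈ Icc (0:ℝ) T :=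
    fun s => ⟨le_max_left _ _, max_le hT0 (min_le_right _ _)⟩
  have hfecont : Continuous fe := by
    apply (hfc.mono hsub).comp_continuous
      (continuous_const.max (continuous_id.min continuous_const)) hclamp
  have hfeeq : ∀ s ∈ Icc (0:ℝ) T, fe s = f s := by
    intro s hs
    simp only [hfedef, min_eq_left hs.2, max_eq_right hs.1]
  have hfenn : ∀ s, 0 ≤ fe s := fun s => hpos _ (hsub (hclamp s))
  set g : ℝ → ℝ := fun x => ∫ s in (0:ℝ)..x, fe s with hgdef
  have hgderiv : ∀ x ∈ Icc (0:ℝ) T, HasDerivAt g (f x) x := by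
    intro x hx
    rw [← hfeeq x hx]
    exact intervalIntegral.integral_hasDerivAt_right
      (hfecont.intervalIntegrable _ _)
      (hfecont.stronglyMeasurableAtFilter _ _) hfecont.continuousAt
  have hg0 : ∀ x ∈ Icc (0:ℝ) T, 0 ≤ g x := by
    intro x hx
    exact intervalIntegral.integral_nonneg hx.1 (fun s _ => hfenn s)
  set K : ℝ := max (M / m) 1 with hKdef
  have hK1 : (1:ℝ) ≤ K := le_max_right _ _
  have hKm : M / m ≤ K := le_max_left _ _
  -- h = f + g
  set h : ℝ → ℝ := fun x => f x + g x with hhdef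
  have hhderiv : ∀ x ∈ Icc (0:ℝ) T, HasDerivAt h (f' x + f x) x :=
    fun x hx => (hderiv x (hsub hx)).add (hgderiv x hx)
  have hhc : ContinuousOn h (Icc 0 T) :=
    fun x hx => ((hhderiv x hx).continuousAt).continuousWithinAt
  have key : ∀ x ∈ Icc (0:ℝ) T, h x ≤ gronwallBound 0 K 0 (x - 0) := by
    apply le_gronwallBound_of_liminf_deriv_right_le hhc
    · intro x hx r hr
      exact ((hhderiv x ⟨hx.1, hx.2.le⟩).hasDerivWithinAt).liminf_right_slope_le hr
    · simp [hhdef, hgdef, hf0]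
    · intro x hx
      have hx' : x ∈ Icc (0:ℝ) T := ⟨hx.1, hx.2.le⟩
      have hxD : x ∈ Ico (0:ℝ) δ := hsub hx'
      have hgx : 0 ≤ g x := hg0 x hx'
      have hfx : 0 ≤ f x := hpos x hxD
      -- ∫ f ξ ≤ M * g x
      have hIle : (∫ s in (0:ℝ)..x, f s * ξ s) ≤ M * g x := by
        have hint1 : IntervalIntegrable (fun s => f s * ξ s) MeasureTheory.volume 0 x := by
          apply ContinuousOn.intervalIntegrable
          rw [uIcc_of_le hx'.1]
          have hssub : Icc (0:ℝ) x ⊆ Ico 0 δ :=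
            fun s hs => hsub ⟨hs.1, le_trans hs.2 hx'.2⟩
          exact ((hfc.mono hssub).mul (hξc.mono hssub))
        have hint2 : IntervalIntegrable (fun s => M * fe s) MeasureTheory.volume 0 x :=
          (hfecont.intervalIntegrable _ _).const_mul M
        have := intervalIntegral.integral_mono_on hx'.1 hint1 hint2 ?_
        · simpa [hgdef, intervalIntegral.integral_const_mul] using this
        · intro s hs
          have hsT : s ∈ Icc (0:ℝ) T := ⟨hs.1, le_trans hs.2 hx'.2⟩
          have hfs : 0 ≤ f s := hpos s (hsub hsT)
          have hξs : ξ s ≤ M := hmax hsT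
          rw [hfeeq s hsT]
          calc f s * ξ s ≤ f s * M := mul_le_mul_of_nonneg_left hξs hfs
            _ = M * f s := mul_comm _ _
      have hηx : 0 < η x := hη x hxD
      have hmx : m ≤ η x := hmin hx'
      -- f' x ≤ (M/m) * g x
      have hf'le : f' x ≤ M / m * g x := by
        have h1 : f' x * η x ≤ M * g x := le_trans (hineq x hxD) hIle
        have h2 : f' x ≤ M * g x / η x := (le_div_iff₀ hηx).2 h1
        have h3 : M * g x / η x ≤ M * g x / m :=
          div_le_div_of_nonneg_left (mul_nonneg hM hgx) hm hmx
        calc f' x ≤ M * g x / m := le_trans h2 h3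
          _ = M / m * g x := by ring
      have : f' x + f x ≤ K * g x + K * f x := by
        have hgK : M / m * g x ≤ K * g x := mul_le_mul_of_nonneg_right hKm hgx
        have hfK : f x ≤ K * f x := le_mul_of_one_le_left hfx hK1
        linarith
      calc f' x + f x ≤ K * g x + K * f x := this
        _ = K * h x + 0 := by simp [hhdef]; ring
  have hht : h t ≤ 0 := by
    have := key t ⟨ht.1, htT⟩
    simpa [gronwallBound_ε0_δ0] using this
  have := hg0 t ⟨ht.1, htT⟩
  simp only [hhdef] at hht
  linarith
end
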